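/- Let m ≥ 2 be an integer. The residue at z = 1 of (log z)²/(z·(1-z)^m) equals -∑_{s=2}^{m-1} (2/s)∑_{p=1}^{s-1} 1/p (interpreted as 0 when m = 2). -/

import Mathlib

/-!
On the slit plane, `f n z = ((log z - H n)² - H₂ n) / z ^ (n + 1)`, with `H n` and `H₂ n` the
harmonic numbers of orders one and two, satisfies `(f n)' = -(n + 1) • f (n + 1)`. Hence the
`n`-th derivative of `(log z)² / z = f 0 z` is `(-1)ⁿ n! f n z`, whose value at `z = 1` is
`(-1)ⁿ n! (H n² - H₂ n)`, and `H n² - H₂ n = ∑_{s=2}^{n} (2/s) H (s-1)` by expanding the square.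
-/

open Complex Finset

def harmonic₂ (n : ℕ) : ℚ := ∑ i ∈ range n, ((i + 1 : ℚ) ^ 2)⁻¹

@[simp]
lemma harmonic₂_zero : harmonic₂ 0 = 0 := rfl

lemma harmonic₂_succ (n : ℕ) : harmonic₂ (n + 1) = harmonic₂ n + ((n + 1 : ℚ) ^ 2)⁻¹ :=
  sum_range_succ ..

lemma harmonic_sq_sub_harmonic₂ (n : ℕ) :
    harmonic n ^ 2 - harmonic₂ n = ∑ s ∈ Icc 2 n, 2 / (s : ℚ) * harmonic (s - 1) := by
  induction n with
  | zero => simp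
  | succ n ih =>
    rcases Nat.eq_zero_or_pos n with rfl | hn
    · simp [harmonic₂_succ]
    rw [sum_Icc_succ_top (by omega), ← ih, harmonic_succ, harmonic₂_succ]
    push_cast
    field_simp
    ring

noncomputable def logSqTerm (n : ℕ) (z : ℂ) : ℂ :=
  ((log z - harmonic n) ^ 2 - harmonic₂ n) / z ^ (n + 1)

lemma hasDerivAt_logSqTerm (n : ℕ) {z : ℂ} (hz : z ∈ slitPlane) :
    HasDerivAt (logSqTerm n) (-(n + 1) * logSqTerm (n + 1) z) z := by
  have hz₀ : z ≠ 0 := slitPlane_ne_zero hz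
  have hnum := (((hasDerivAt_log hz).sub_const (harmonic n : ℂ)).pow 2).sub_const (harmonic₂ n : ℂ)
  refine (hnum.div (hasDerivAt_pow (n + 1) z) (pow_ne_zero _ hz₀)).congr_deriv ?_
  simp only [logSqTerm, Pi.pow_apply, harmonic_succ, harmonic₂_succ]
  push_cast
  field_simp
  ring

lemma eqOn_iteratedDeriv_logSqTerm_zero (n : ℕ) :
    Set.EqOn (iteratedDeriv n (logSqTerm 0)) (fun z => (-1) ^ n * n.factorial * logSqTerm n z)
      slitPlane := by
  induction n with
  | zero => intro z _; simp
  | succ n ih =>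
    intro z hz
    rw [iteratedDeriv_succ, (ih.eventuallyEq_of_mem (isOpen_slitPlane.mem_nhds hz)).deriv_eq,
      ((hasDerivAt_logSqTerm n hz).const_mul _).deriv, Nat.factorial_succ]
    push_cast
    ring

lemma logSqTerm_one (n : ℕ) : logSqTerm n 1 = harmonic n ^ 2 - harmonic₂ n := by
  simp [logSqTerm]

theorem residue_log_sq_over_one_sub_pow_general (m : ℕ) :
    (1 / (m - 1).factorial : ℂ) *
      iteratedDeriv (m - 1) (fun z : ℂ => (-1) ^ m * (Complex.log z) ^ 2 / z) 1 =
      -∑ s ∈ Finset.Icc 2 (m - 1),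
        ((2 / (s : ℂ)) * ∑ p ∈ Finset.Icc 1 (s - 1), (1 / (p : ℂ))) := by
  rcases m with _ | n
  · simp
  have hf : (fun z : ℂ => (-1) ^ (n + 1) * log z ^ 2 / z) =
      fun z => (-1) ^ (n + 1) * logSqTerm 0 z := by
    simp [logSqTerm, mul_div_assoc]
  have hC : (harmonic n : ℂ) ^ 2 - harmonic₂ n =
      ∑ s ∈ Icc 2 n, 2 / (s : ℂ) * ∑ p ∈ Icc 1 (s - 1), 1 / (p : ℂ) := by
    rw [← Rat.cast_pow, ← Rat.cast_sub, harmonic_sq_sub_harmonic₂]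
    simp [harmonic_eq_sum_Icc]
  rw [Nat.add_sub_cancel, hf, iteratedDeriv_const_mul_field,
    eqOn_iteratedDeriv_logSqTerm_zero n one_mem_slitPlane]
  simp only [logSqTerm_one, ← hC]
  have hsign : (-1 : ℂ) ^ (n + 1) * (-1) ^ n = -1 := by
    rw [← pow_add, show n + 1 + n = 2 * n + 1 by ring, pow_succ, pow_mul]
    norm_num
  have hfac : (n.factorial : ℂ) ≠ 0 := Nat.cast_ne_zero.mpr n.factorial_ne_zero
  field_simp
  linear_combination ((harmonic n : ℂ) ^ 2 - harmonic₂ n) * hsign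

/-- The residue at z = 1 of (log z)²/(z(1-z)^m), computed as the (m-1)-st Taylor
coefficient of (z-1)^m · (log z)²/(z(1-z)^m) = (-1)^m (log z)²/z, equals
-∑_{s=2}^{m-1} (2/s)∑_{p=1}^{s-1} 1/p. -/
theorem residue_log_sq_over_one_sub_pow (m : ℕ) (hm : 2 ≤ m) :
    (1 / (m - 1).factorial : ℂ) *
      iteratedDeriv (m - 1) (fun z : ℂ => (-1) ^ m * (Complex.log z) ^ 2 / z) 1 =
      -∑ s ∈ Finset.Icc 2 (m - 1),
        ((2 / (s : ℂ)) * ∑ p ∈ Finset.Icc 1 (s - 1), (1 / (p : ℂ))) :=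
  residue_log_sq_over_one_sub_pow_general m
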